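/- Let A : ℝ → ℝ be continuously differentiable, suppose there is a₀ > 0 with A(x) ≥ a₀ for all x ∈ ℝ, suppose ∫_ℝ (1 + |t|)·|A′(t)| dt < ∞, and let A₊ = lim_{x→+∞} A(x) and A₋ = lim_{x→−∞} A(x). Then there exists a differentiable function r₀ : ℝ → ℝ with r₀(x) > 0 for all x, r₀ bounded on ℝ, satisfying r₀′(x) = A(x)/r₀(x) − 1 for all x ∈ ℝ, and such that r₀(x) → A₊ as x → +∞ and r₀(x) → A₋ as x → −∞. -/

import Mathlib

/-!
Cutting the nonlinearity off below `a₀ / 2` turns `r' = A(x)/r - 1` into an ODE with a bounded,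
globally Lipschitz right-hand side, so every initial value at time `0` has a global solution
depending continuously on it. The field points into the strip `a₀ / 2 ≤ r ≤ sup A + 1` on both of
its edges, so solutions never leave the strip forward in time. The initial values whose solution
lies below, resp. above, the strip at some time `≤ 0` form two disjoint nonempty open sets; since
`ℝ` is connected some initial value lies in neither, and its solution stays in the strip for all
time. Finally, near `±∞` the field pushes any solution in the strip towards the limit `L` of `A`
at a uniform rate as long as it stays away from `L`; a bounded solution cannot keep drifting
forever, which forces convergence to `L`.
-/

open MeasureTheory Filter
open Set Topology
open scoped NNReal

section Fences

variable {f f' : ℝ → ℝ}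

theorem image_le_of_hasDerivAt_neg_at_level (hf : ∀ t, HasDerivAt f (f' t) t) {a b x : ℝ}
    (hax : a ≤ x) (ha : f a ≤ b) (hb : ∀ t ∈ Ico a x, f t = b → f' t < 0) : f x ≤ b :=
  image_le_of_deriv_right_lt_deriv_boundary (HasDerivAt.continuousOn fun t _ => hf t)
    (fun t _ => (hf t).hasDerivWithinAt) (B' := 0) ha (fun _ => hasDerivAt_const _ b) hb
    ⟨hax, le_rfl⟩

theorem le_image_of_hasDerivAt_pos_at_level (hf : ∀ t, HasDerivAt f (f' t) t) {a b x : ℝ}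
    (hax : a ≤ x) (ha : b ≤ f a) (hb : ∀ t ∈ Ico a x, f t = b → 0 < f' t) : b ≤ f x :=
  neg_le_neg_iff.mp <| image_le_of_hasDerivAt_neg_at_level (fun t => (hf t).neg) hax
    (neg_le_neg ha) fun t ht h => neg_neg_iff_pos.mpr (hb t ht (neg_inj.mp h))

theorem sub_le_mul_sub_of_hasDerivAt_le (hf : ∀ t, HasDerivAt f (f' t) t) {D : Set ℝ}
    (hD : Convex ℝ D) {C : ℝ} (hC : ∀ t ∈ D, f' t ≤ C) {x y : ℝ} (hx : x ∈ D) (hy : y ∈ D)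
    (hxy : x ≤ y) : f y - f x ≤ C * (y - x) :=
  hD.image_sub_le_mul_sub_of_deriv_le (HasDerivAt.continuousOn fun t _ => hf t)
    (fun t _ => (hf t).differentiableAt.differentiableWithinAt)
    (fun t ht => (hf t).deriv ▸ hC t (interior_subset ht)) x hx y hy hxy

end Fences

def DriftsBelow (f f' : ℝ → ℝ) (l : Filter ℝ) : Prop :=
  ∀ b δ : ℝ, 0 < δ → (∀ᶠ t in l, b ≤ f t → f' t ≤ -δ) → ∀ᶠ t in l, f t ≤ b

section Drift

variable {f f' : ℝ → ℝ}

theorem driftsBelow_atTop (hf : ∀ t, HasDerivAt f (f' t) t) (hbdd : BddBelow (range f)) :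
    DriftsBelow f f' atTop := by
  intro b δ hδ hdrift
  obtain ⟨X, hX⟩ := eventually_atTop.mp hdrift
  obtain ⟨x₁, hXx₁, hx₁⟩ : ∃ x₁, X ≤ x₁ ∧ f x₁ ≤ b := by
    by_contra! hgt
    obtain ⟨m, hm⟩ := hbdd
    set y := X + (f X - m + 1) / δ
    have hXy : X ≤ y := le_add_of_nonneg_right (div_nonneg (by linarith [hm ⟨X, rfl⟩]) hδ.le)
    have hdecay := sub_le_mul_sub_of_hasDerivAt_le hf (convex_Ici X)
      (fun t ht => hX t ht (hgt t ht).le) self_mem_Ici hXy hXy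
    have hy : -δ * (y - X) = -(f X - m + 1) := by simp only [y]; field_simp; ring
    linarith [hm ⟨y, rfl⟩]
  filter_upwards [eventually_ge_atTop x₁] with x hx
  exact image_le_of_hasDerivAt_neg_at_level hf hx hx₁ fun t ht hft =>
    (hX t (hXx₁.trans ht.1) hft.ge).trans_lt (neg_neg_of_pos hδ)

theorem driftsBelow_atBot (hf : ∀ t, HasDerivAt f (f' t) t) (hbdd : BddAbove (range f)) :
    DriftsBelow f f' atBot := by
  intro b δ hδ hdrift
  obtain ⟨X, hX⟩ := eventually_atBot.mp hdrift
  filter_upwards [eventually_le_atBot X] with x₀ hx₀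
  by_contra! hgt
  have habove : ∀ t ≤ x₀, b ≤ f t := fun t ht => by
    by_contra! hlt
    exact hgt.not_ge (image_le_of_hasDerivAt_neg_at_level hf ht hlt.le fun s hs hfs =>
      (hX s (hs.2.le.trans hx₀) hfs.ge).trans_lt (neg_neg_of_pos hδ))
  obtain ⟨m, hm⟩ := hbdd
  set y := x₀ - (m - f x₀ + 1) / δ
  have hyx₀ : y ≤ x₀ := sub_le_self _ (div_nonneg (by linarith [hm ⟨x₀, rfl⟩]) hδ.le)
  have hgrowth := sub_le_mul_sub_of_hasDerivAt_le hf (convex_Iic x₀)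
    (fun t ht => hX t (mem_Iic.mp ht |>.trans hx₀) (habove t ht)) hyx₀ self_mem_Iic hyx₀
  have hy : -δ * (x₀ - y) = -(m - f x₀ + 1) := by simp only [y]; field_simp; ring
  linarith [hm ⟨y, rfl⟩]

end Drift

theorem tendsto_of_driftsBelow {l : Filter ℝ} {A r : ℝ → ℝ} {L R : ℝ} (hpos : ∀ x, 0 < r x)
    (hR : ∀ x, r x ≤ R) (hA : Tendsto A l (𝓝 L))
    (hdown : DriftsBelow r (fun x => A x / r x - 1) l)
    (hup : DriftsBelow (-r) (fun x => -(A x / r x - 1)) l) : Tendsto r l (𝓝 L) := by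
  have hR₀ : 0 < R := (hpos 0).trans_le (hR 0)
  refine tendsto_order.2 ⟨fun a ha => ?_, fun a ha => ?_⟩
  · obtain ⟨c, hac, hcL⟩ := exists_between ha
    obtain ⟨d, hcd, hdL⟩ := exists_between hcL
    have hdrift : ∀ᶠ x in l, -c ≤ (-r) x → -(A x / r x - 1) ≤ -((d - c) / R) := by
      filter_upwards [hA.eventually (lt_mem_nhds hdL)] with x hAx hrx
      have hrc : r x ≤ c := neg_le_neg_iff.mp hrx
      rw [neg_le_neg_iff]
      calc (d - c) / R ≤ (A x - r x) / r x := by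
            gcongr
            · linarith
            · exact hpos x
            · exact hR x
        _ = A x / r x - 1 := by rw [sub_div, div_self (hpos x).ne']
    filter_upwards [hup (-c) _ (div_pos (sub_pos.2 hcd) hR₀) hdrift] with x hx
    linarith [show -r x ≤ -c from hx]
  · obtain ⟨c, hLc, hca⟩ := exists_between ha
    obtain ⟨d, hLd, hdc⟩ := exists_between hLc
    have hdrift : ∀ᶠ x in l, c ≤ r x → A x / r x - 1 ≤ -((c - d) / R) := by
      filter_upwards [hA.eventually (gt_mem_nhds hLd)] with x hAx hrx
      rw [le_neg]
      calc (c - d) / R ≤ (r x - A x) / r x := by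
            gcongr
            · linarith
            · exact hpos x
            · exact hR x
        _ = -(A x / r x - 1) := by rw [sub_div, div_self (hpos x).ne']; ring
    filter_upwards [hdown c _ (div_pos (sub_pos.2 hdc) hR₀) hdrift] with x hx
    exact hx.trans_lt hca

section GlobalSolutions

variable {E : Type*} [NormedAddCommGroup E] [NormedSpace ℝ E] {v : ℝ → E → E} {K : ℝ≥0}

theorem exists_forall_mem_Ioo_hasDerivAt_of_lipschitzWith [CompleteSpace E]
    (hlip : ∀ t, LipschitzWith K (v t)) (hcont : ∀ x, Continuous (v · x)) {C : ℝ≥0}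
    (hbd : ∀ t x, ‖v t x‖ ≤ C) (x₀ : E) (T : ℝ≥0) :
    ∃ γ : ℝ → E, γ 0 = x₀ ∧ ∀ t ∈ Ioo (-(T : ℝ)) T, HasDerivAt γ (v t (γ t)) t := by
  have hpl : IsPicardLindelof v (tmin := -T) (tmax := T) ⟨0, by simp⟩ x₀ (C * T) 0 C K :=
    { lipschitzOnWith := fun t _ => (hlip t).lipschitzOnWith
      continuousOn := fun x _ => (hcont x).continuousOn
      norm_le := fun t _ x _ => hbd t x
      mul_max_le := by simp }
  obtain ⟨γ, hγ₀, hγ⟩ := hpl.exists_eq_forall_mem_Icc_hasDerivWithinAt₀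
  exact ⟨γ, hγ₀, fun t ht => (hγ t (Ioo_subset_Icc_self ht)).hasDerivAt (Icc_mem_nhds ht.1 ht.2)⟩

theorem exists_isIntegralCurve_of_lipschitzWith [CompleteSpace E]
    (hlip : ∀ t, LipschitzWith K (v t)) (hcont : ∀ x, Continuous (v · x)) {C : ℝ≥0}
    (hbd : ∀ t x, ‖v t x‖ ≤ C) (x₀ : E) : ∃ γ : ℝ → E, γ 0 = x₀ ∧ IsIntegralCurve γ v := by
  choose F hF₀ hF using
    fun n : ℕ => exists_forall_mem_Ioo_hasDerivAt_of_lipschitzWith hlip hcont hbd x₀ n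
  have hagree : ∀ (m n : ℕ) (t : ℝ), |t| < m → |t| < n → F m t = F n t := by
    intro m n t hm hn
    have hsub : ∀ k : ℕ, min (m : ℝ) n ≤ k → Ioo (-min (m : ℝ) n) (min (m : ℝ) n) ⊆
        Ioo (-((k : ℝ≥0) : ℝ)) (k : ℝ≥0) := fun k hk => by
      simpa using Ioo_subset_Ioo (neg_le_neg hk) hk
    refine ODE_solution_unique_of_mem_Ioo (s := fun _ => univ)
      (fun t _ => (hlip t).lipschitzOnWith) (abs_lt.mp ?_)
      (fun τ hτ => ⟨hF m τ (hsub m (min_le_left _ _) hτ), trivial⟩)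
      (fun τ hτ => ⟨hF n τ (hsub n (min_le_right _ _) hτ), trivial⟩)
      ((hF₀ m).trans (hF₀ n).symm) (abs_lt.mp (lt_min hm hn))
    simpa using (abs_nonneg t).trans_lt (lt_min hm hn)
  set N : ℝ → ℕ := fun t => ⌊|t|⌋₊ + 1
  have hN : ∀ t, |t| < N t := fun t => by simpa [N] using Nat.lt_floor_add_one |t|
  refine ⟨fun t => F (N t) t, hF₀ _, fun t => ?_⟩
  have hnear : (fun τ => F (N τ) τ) =ᶠ[𝓝 t] F (N t) := by
    filter_upwards [(isOpen_lt continuous_abs continuous_const).mem_nhds (hN t)] with τ hτ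
    exact hagree _ _ τ (hN τ) hτ
  exact (hF (N t) t (by simpa using abs_lt.mp (hN t))).congr_of_eventuallyEq hnear

theorem IsIntegralCurve.dist_le_mul_exp_of_le (hlip : ∀ t, LipschitzWith K (v t))
    {f g : ℝ → E} (hf : IsIntegralCurve f v) (hg : IsIntegralCurve g v) {s t : ℝ}
    (hst : s ≤ t) : dist (f s) (g s) ≤ dist (f t) (g t) * Real.exp (K * (t - s)) := by
  have hlip' : ∀ τ, LipschitzWith K (((-1 : ℝ) • v ∘ (· * -1)) τ) := fun τ =>
    LipschitzWith.of_dist_le_mul fun x y => by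
      simpa [dist_neg_neg] using (hlip (τ * -1)).dist_le_mul x y
  have hf' := hf.comp_mul (-1)
  have hg' := hg.comp_mul (-1)
  have := dist_le_of_trajectories_ODE hlip' (hf'.continuous.continuousOn)
    (fun τ _ => (hf' τ).hasDerivWithinAt) (hg'.continuous.continuousOn)
    (fun τ _ => (hg' τ).hasDerivWithinAt) (a := -t) (b := -s) le_rfl (-s) ⟨by linarith, le_rfl⟩
  simpa [sub_eq_add_neg, add_comm] using this

theorem continuous_flow_apply_of_nonpos (hlip : ∀ t, LipschitzWith K (v t)) {Y : E → ℝ → E}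
    (hY₀ : ∀ c, Y c 0 = c) (hY : ∀ c, IsIntegralCurve (Y c) v) {s : ℝ} (hs : s ≤ 0) :
    Continuous fun c => Y c s :=
  (LipschitzWith.of_dist_le_mul (K := (Real.exp (K * -s)).toNNReal) fun c c' => by
    rw [Real.coe_toNNReal _ (Real.exp_pos _).le, mul_comm]
    simpa [hY₀] using (hY c).dist_le_mul_exp_of_le hlip (hY c') hs).continuous

end GlobalSolutions

theorem exists_isIntegralCurve_forall_mem_Icc {v : ℝ → ℝ → ℝ} {K C : ℝ≥0}
    (hlip : ∀ t, LipschitzWith K (v t)) (hcont : ∀ x, Continuous (v · x))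
    (hbd : ∀ t x, ‖v t x‖ ≤ C) {lo hi : ℝ} (hlohi : lo ≤ hi) (hlo : ∀ t, 0 < v t lo)
    (hhi : ∀ t, v t hi < 0) : ∃ γ : ℝ → ℝ, IsIntegralCurve γ v ∧ ∀ t, γ t ∈ Icc lo hi := by
  choose Y hY₀ hY using exists_isIntegralCurve_of_lipschitzWith hlip hcont hbd
  have stays_below : ∀ c s t, s ≤ t → Y c s ≤ hi → Y c t ≤ hi := fun c s t hst hs =>
    image_le_of_hasDerivAt_neg_at_level (hY c) hst hs fun τ _ h => by rw [h]; exact hhi τ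
  have stays_above : ∀ c s t, s ≤ t → lo ≤ Y c s → lo ≤ Y c t := fun c s t hst hs =>
    le_image_of_hasDerivAt_pos_at_level (hY c) hst hs fun τ _ h => by rw [h]; exact hlo τ
  have hYcont : ∀ s ≤ 0, Continuous fun c => Y c s :=
    fun s => continuous_flow_apply_of_nonpos hlip hY₀ hY
  set U := ⋃ s ∈ Iic (0 : ℝ), (fun c => Y c s) ⁻¹' Iio lo
  set V := ⋃ s ∈ Iic (0 : ℝ), (fun c => Y c s) ⁻¹' Ioi hi
  have hU : IsOpen U := isOpen_biUnion fun s hs => isOpen_Iio.preimage (hYcont s hs)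
  have hV : IsOpen V := isOpen_biUnion fun s hs => isOpen_Ioi.preimage (hYcont s hs)
  have hUV : ∀ c ∈ U, c ∉ V := by
    simp only [U, V, mem_iUnion₂, mem_preimage, mem_Iio, mem_Ioi, not_exists, not_lt]
    rintro c ⟨s, -, hs⟩ t -
    rcases le_total s t with hst | hts
    · exact stays_below c s t hst (hs.le.trans hlohi)
    · by_contra! ht
      exact hs.not_ge (stays_above c t s hts (hlohi.trans ht.le))
  obtain ⟨c, hcU, hcV⟩ : ∃ c, c ∉ U ∧ c ∉ V := by
    by_contra! hcover
    have hlo' : lo - 1 ∈ U := mem_biUnion self_mem_Iic (by simp [hY₀])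
    have hhi' : hi + 1 ∈ V := mem_biUnion self_mem_Iic (by simp [hY₀])
    obtain ⟨c, -, hcU, hcV⟩ := isPreconnected_univ U V hU hV
      (fun c _ => (em (c ∈ U)).imp_right (hcover c)) ⟨_, trivial, hlo'⟩ ⟨_, trivial, hhi'⟩
    exact hUV c hcU hcV
  simp only [U, V, mem_iUnion₂, mem_preimage, mem_Iio, mem_Ioi, not_exists, not_lt] at hcU hcV
  refine ⟨Y c, hY c, fun t => ?_⟩
  rcases le_total t 0 with ht | ht
  · exact ⟨hcU t ht, hcV t ht⟩
  · exact ⟨stays_above c 0 t ht (hcU 0 self_mem_Iic),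
      stays_below c 0 t ht (hcV 0 self_mem_Iic)⟩

theorem lipschitzWith_div_max_sub_one {a M ρ₀ : ℝ} (hρ₀ : 0 < ρ₀) (ha : 0 ≤ a) (haM : a ≤ M) :
    LipschitzWith (M / ρ₀ ^ 2).toNNReal fun ρ => a / max ρ ρ₀ - 1 := by
  refine LipschitzWith.of_dist_le_mul fun x y => ?_
  have hx : ρ₀ ≤ max x ρ₀ := le_max_right _ _
  have hy : ρ₀ ≤ max y ρ₀ := le_max_right _ _
  have hxy₀ : 0 < max x ρ₀ * max y ρ₀ := mul_pos (hρ₀.trans_le hx) (hρ₀.trans_le hy)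
  have hxy : a / max x ρ₀ - 1 - (a / max y ρ₀ - 1) =
      a * (max y ρ₀ - max x ρ₀) / (max x ρ₀ * max y ρ₀) := by
    field_simp [(hρ₀.trans_le hx).ne', (hρ₀.trans_le hy).ne']
    ring
  rw [Real.coe_toNNReal _ (by have := ha.trans haM; positivity), Real.dist_eq, Real.dist_eq, hxy,
    abs_div, abs_of_pos hxy₀, abs_mul, abs_of_nonneg ha, abs_sub_comm x y]
  calc a * |max y ρ₀ - max x ρ₀| / (max x ρ₀ * max y ρ₀) ≤ M * |y - x| / ρ₀ ^ 2 :=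
        div_le_div₀ (by have := ha.trans haM; positivity)
          (mul_le_mul haM (abs_max_sub_max_le_abs y x ρ₀) (abs_nonneg _) (ha.trans haM))
          (by positivity) (by rw [sq]; exact mul_le_mul hx hy hρ₀.le (hρ₀.le.trans hx))
    _ = M / ρ₀ ^ 2 * |y - x| := by ring

theorem exists_hasDerivAt_div_sub_one_mem_Icc {A : ℝ → ℝ} (hA : Continuous A) {a₀ M : ℝ}
    (ha₀ : 0 < a₀) (hA₀ : ∀ x, a₀ ≤ A x) (hM : ∀ x, A x ≤ M) :
    ∃ r : ℝ → ℝ, (∀ x, HasDerivAt r (A x / r x - 1) x) ∧ ∀ x, r x ∈ Icc (a₀ / 2) (M + 1) := by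
  have hlo : 0 < a₀ / 2 := half_pos ha₀
  have hloA : ∀ t, a₀ / 2 < A t := fun t => (half_lt_self ha₀).trans_le (hA₀ t)
  have hloM : a₀ / 2 ≤ M + 1 := by linarith [hloA 0, hM 0]
  have hbd : ∀ t ρ, ‖A t / max ρ (a₀ / 2) - 1‖ ≤ (M / (a₀ / 2) + 1).toNNReal := fun t ρ => by
    have h₀ : 0 ≤ A t / max ρ (a₀ / 2) :=
      div_nonneg (hlo.trans (hloA t)).le (hlo.trans_le (le_max_right _ _)).le
    have h₁ : A t / max ρ (a₀ / 2) ≤ M / (a₀ / 2) :=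
      div_le_div₀ ((hlo.trans (hloA t)).le.trans (hM t)) (hM t) hlo (le_max_right _ _)
    rw [Real.coe_toNNReal _ (by linarith), Real.norm_eq_abs, abs_le]
    constructor <;> linarith
  obtain ⟨r, hr, hmem⟩ := exists_isIntegralCurve_forall_mem_Icc
    (fun t => lipschitzWith_div_max_sub_one hlo (hlo.trans (hloA t)).le (hM t))
    (fun ρ => (hA.div_const _).sub continuous_const) hbd hloM
    (fun t => by rw [max_self, sub_pos, one_lt_div hlo]; exact hloA t)
    (fun t => by rw [max_eq_left hloM, sub_neg, div_lt_one (by linarith)]; linarith [hM t])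
  refine ⟨r, fun x => ?_, hmem⟩
  simpa only [max_eq_left (hmem x).1] using hr x

theorem acoustic_white_hole_horizon_exists (A : ℝ → ℝ) (hA : ContDiff ℝ 1 A)
    (a₀ : ℝ) (ha₀ : 0 < a₀) (hApos : ∀ x, a₀ ≤ A x)
    (Aplus Aminus : ℝ)
    (hplus : Tendsto A atTop (nhds Aplus))
    (hminus : Tendsto A atBot (nhds Aminus)) :
    ∃ r₀ : ℝ → ℝ,
      (∀ x, 0 < r₀ x) ∧
      (∃ M, ∀ x, r₀ x ≤ M) ∧
      (∀ x, HasDerivAt r₀ (A x / r₀ x - 1) x) ∧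
      Tendsto r₀ atTop (nhds Aplus) ∧
      Tendsto r₀ atBot (nhds Aminus) := by
  obtain ⟨M, hM⟩ : BddAbove (range A) := (hA.continuous.isBounded_range_iff_isBigO_atTop_atBot.2
    ⟨hplus.isBigO_one ℝ, hminus.isBigO_one ℝ⟩).bddAbove
  obtain ⟨r, hr, hmem⟩ :=
    exists_hasDerivAt_div_sub_one_mem_Icc hA.continuous ha₀ hApos fun x => hM ⟨x, rfl⟩
  have hpos : ∀ x, 0 < r x := fun x => (half_pos ha₀).trans_le (hmem x).1
  have hR : ∀ x, r x ≤ M + 1 := fun x => (hmem x).2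
  have hr' : ∀ x, HasDerivAt (-r) (-(A x / r x - 1)) x := fun x => (hr x).neg
  refine ⟨r, hpos, ⟨M + 1, hR⟩, hr, ?_, ?_⟩
  · exact tendsto_of_driftsBelow hpos hR hplus
      (driftsBelow_atTop hr ⟨0, forall_mem_range.2 fun x => (hpos x).le⟩)
      (driftsBelow_atTop hr' ⟨-(M + 1), forall_mem_range.2 fun x => neg_le_neg (hR x)⟩)
  · exact tendsto_of_driftsBelow hpos hR hminus
      (driftsBelow_atBot hr ⟨M + 1, forall_mem_range.2 hR⟩)
      (driftsBelow_atBot hr' ⟨0, forall_mem_range.2 fun x => neg_nonpos.2 (hpos x).le⟩)
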